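/- arXiv:2203.16128 — 4 statements merged into one kernel-verified Lean document; each statement's English description precedes it below -/
import Mathlib

section
/- (Theorem 1) For every integer r ≥ 1 and every n ≥ 1, all complex zeros of the polynomial Z_n are real and negative; that is, if z ∈ ℂ satisfies Z_n(z) = 0, then z is real and z < 0. -/
open Polynomial

/-- The partition function of the 1d classical Rydberg blockade chain with `n` sites and
blockade radius `r`:  `Z_n(y) = Σ_{m=0}^{⌊(n+r)/(r+1)⌋} C(n - r(m-1), m) y^m`. -/
noncomputable def Z (r n : ℕ) : Polynomial ℝ :=
  ∑ m ∈ Finset.range ((n + r) / (r + 1) + 1),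
    Polynomial.C ((Nat.choose (n - r * (m - 1)) m : ℝ)) * Polynomial.X ^ m

/-!
By Pascal's rule, `Z r (n + 1) = Z r n + y * Z r (n - r)`. We show by induction on `n` that
`Z r n` has `deg Z r n` simple negative roots `α 0 > α 1 > ⋯`, and that they interlace with the
roots `β` of `Z r (n - r)` as `0 > α 0 > β 0 > α 1 > β 1 > ⋯`. At `α j` the recursion gives
`Z r (n + 1) = α j * Z r (n - r)`, at `β j` it gives `Z r (n + 1) = Z r n`, and at `0` the value
is `1`; these signs alternate, so the intermediate value theorem puts a root of `Z r (n + 1)` in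
each of `(α 0, 0), (α 1, β 0), …` (the last interval unbounded below when `deg Z r n` is
`deg Z r (n - r)`), and this accounts for all of its roots. Since the roots of `Z r m` increase
with `m`, the new roots interlace in the same way with those of `Z r (n + 1 - r)`.
-/

open Finset Filter

structure HasSimpleNegRoots (p : ℝ[X]) (x : ℕ → ℝ) : Prop where
  neg : ∀ j < p.natDegree, x j < 0
  strictAntiOn : StrictAntiOn x (Set.Iio p.natDegree)
  isRoot : ∀ j < p.natDegree, p.IsRoot (x j)

namespace HasSimpleNegRoots

variable {p : ℝ[X]} {x : ℕ → ℝ}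

theorem roots_eq (h : HasSimpleNegRoots p x) (hp : p ≠ 0) :
    p.roots = (range p.natDegree).val.map x := by
  have hnodup : ((range p.natDegree).val.map x).Nodup :=
    (range p.natDegree).nodup.map_on fun i hi j hj =>
      h.strictAntiOn.injOn (mem_range.1 hi) (mem_range.1 hj)
  have hle : (range p.natDegree).val.map x ≤ p.roots := by
    refine (Multiset.le_iff_subset hnodup).2 fun a ha => ?_
    obtain ⟨j, hj, rfl⟩ := Multiset.mem_map.1 ha
    exact (mem_roots hp).2 (h.isRoot j (mem_range.1 hj))
  exact (Multiset.eq_of_le_of_card_le hle (by simpa using p.card_roots')).symm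

theorem eval_eq (h : HasSimpleNegRoots p x) (hp : p ≠ 0) (t : ℝ) :
    p.eval t = p.leadingCoeff * ∏ j ∈ range p.natDegree, (t - x j) := by
  have hsplits : p.Splits := splits_iff_card_roots.2 (by simp [h.roots_eq hp])
  rw [hsplits.eval_eq_prod_roots, h.roots_eq hp, Multiset.map_map, prod_eq_multiset_prod]
  rfl

theorem neg_one_pow_mul_eval_pos (h : HasSimpleNegRoots p x) (hlc : 0 < p.leadingCoeff)
    {k : ℕ} (hk : k ≤ p.natDegree) {t : ℝ} (hup : k ≠ 0 → t < x (k - 1))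
    (hdown : k < p.natDegree → x k < t) : 0 < (-1) ^ k * p.eval t := by
  have hp : p ≠ 0 := fun h0 => by simp [h0] at hlc
  have above : ∀ j ∈ range k, 0 < x j - t := fun j hj => by
    have hjk := mem_range.1 hj
    have := h.strictAntiOn.antitoneOn (show j ∈ Set.Iio p.natDegree by grind)
      (show k - 1 ∈ Set.Iio p.natDegree by grind) (by omega : j ≤ k - 1)
    linarith [hup (by omega)]
  have below : ∀ j ∈ Ico k p.natDegree, 0 < t - x j := fun j hj => by
    obtain ⟨hkj, hjd⟩ := mem_Ico.1 hj
    have := h.strictAntiOn.antitoneOn (show k ∈ Set.Iio p.natDegree by grind)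
      (show j ∈ Set.Iio p.natDegree from hjd) hkj
    linarith [hdown (by omega)]
  have hprod : (-1) ^ k * ∏ j ∈ range k, (t - x j) = ∏ j ∈ range k, (x j - t) := by
    simp only [← neg_sub (x _) t, prod_neg, card_range, ← mul_assoc, ← mul_pow]
    norm_num
  calc 0 < p.leadingCoeff * ((∏ j ∈ range k, (x j - t)) * ∏ j ∈ Ico k p.natDegree, (t - x j)) :=
        mul_pos hlc (mul_pos (prod_pos above) (prod_pos below))
    _ = (-1) ^ k * p.eval t := by
        rw [h.eval_eq hp, ← prod_range_mul_prod_Ico _ hk, ← hprod]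
        ring

theorem exists_neg_eq_of_isRoot_map (h : HasSimpleNegRoots p x) (hp : p ≠ 0) {z : ℂ}
    (hz : (p.map (algebraMap ℝ ℂ)).IsRoot z) : ∃ t : ℝ, t < 0 ∧ (t : ℂ) = z := by
  have hz' : z ∈ (p.map (algebraMap ℝ ℂ)).roots := (mem_roots (map_ne_zero hp)).2 hz
  rw [← roots_map_of_injective_of_card_eq_natDegree (algebraMap ℝ ℂ).injective
    (by simp [h.roots_eq hp]), h.roots_eq hp, Multiset.map_map, Multiset.mem_map] at hz'
  obtain ⟨j, hj, rfl⟩ := hz'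
  exact ⟨x j, h.neg j (mem_range.1 hj), rfl⟩

end HasSimpleNegRoots

theorem exists_isRoot_Ioo_of_neg_one_pow {p : ℝ[X]} {a b : ℝ} (hab : a < b) (k : ℕ)
    (ha : 0 < (-1) ^ (k + 1) * p.eval a) (hb : 0 < (-1) ^ k * p.eval b) :
    ∃ t ∈ Set.Ioo a b, p.IsRoot t := by
  have hcont : ContinuousOn (fun t => p.eval t) (Set.Icc a b) := p.continuous.continuousOn
  rw [pow_succ] at ha
  rcases neg_one_pow_eq_or ℝ k with h | h <;> rw [h] at ha hb
  · exact intermediate_value_Ioo hab.le hcont ⟨by linarith, by linarith⟩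
  · exact intermediate_value_Ioo' hab.le hcont ⟨by linarith, by linarith⟩

theorem exists_lt_neg_one_pow_mul_eval_pos {p : ℝ[X]} (hdeg : 0 < p.natDegree)
    (hlc : 0 < p.leadingCoeff) (u : ℝ) : ∃ t < u, 0 < (-1) ^ p.natDegree * p.eval t := by
  have hlead : Tendsto (fun t : ℝ => (-1) ^ p.natDegree * (p.leadingCoeff * t ^ p.natDegree))
      atBot atTop := by
    have h1 : Tendsto (fun t : ℝ => (-t) ^ p.natDegree) atBot atTop :=
      (tendsto_pow_atTop hdeg.ne').comp tendsto_neg_atBot_atTop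
    refine (h1.const_mul_atTop hlc).congr fun t => ?_
    rw [neg_pow]
    ring
  have hequiv := (Asymptotics.IsEquivalent.refl (u := fun _ : ℝ => (-1 : ℝ) ^ p.natDegree)
    (l := atBot)).mul p.isEquivalent_atBot_lead
  obtain ⟨t, ht, htu⟩ :=
    ((hequiv.symm.tendsto_atTop hlead).eventually_gt_atTop 0).and (eventually_lt_atBot u) |>.exists
  exact ⟨t, htu, ht⟩

theorem exists_hasSimpleNegRoots_of_sign_changes {p : ℝ[X]} {ℓ u : ℕ → ℝ}
    (hℓu : ∀ j < p.natDegree, ℓ j < u j) (huℓ : ∀ j, j + 1 < p.natDegree → u (j + 1) ≤ ℓ j)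
    (hu : ∀ j < p.natDegree, u j ≤ 0)
    (hpℓ : ∀ j < p.natDegree, 0 < (-1) ^ (j + 1) * p.eval (ℓ j))
    (hpu : ∀ j < p.natDegree, 0 < (-1) ^ j * p.eval (u j)) :
    ∃ γ : ℕ → ℝ, HasSimpleNegRoots p γ ∧ ∀ j < p.natDegree, γ j ∈ Set.Ioo (ℓ j) (u j) := by
  have hroot : ∀ j < p.natDegree, ∃ t ∈ Set.Ioo (ℓ j) (u j), p.IsRoot t := fun j hj =>
    exists_isRoot_Ioo_of_neg_one_pow (hℓu j hj) j (hpℓ j hj) (hpu j hj)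
  choose! γ hγ hγroot using hroot
  refine ⟨γ, ⟨fun j hj => (hγ j hj).2.trans_le (hu j hj), ?_, hγroot⟩, hγ⟩
  refine strictAntiOn_of_succ_lt Set.ordConnected_Iio fun j _ hj hj1 => ?_
  rw [Order.succ_eq_add_one] at hj1 ⊢
  linarith [(hγ (j + 1) hj1).2, (hγ j hj).1, huℓ j hj1]

namespace HasSimpleNegRoots

variable {A B : ℝ[X]} {α β : ℕ → ℝ}

theorem neg_one_pow_mul_eval_add_X_mul_right_pos (hA : HasSimpleNegRoots A α)
    (hB : HasSimpleNegRoots B β) (hAlc : 0 < A.leadingCoeff) (hBA : B.natDegree ≤ A.natDegree)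
    (hβα : ∀ j < B.natDegree, β j < α j) (hαβ : ∀ j, j + 1 < A.natDegree → α (j + 1) < β j)
    {i : ℕ} (hi : i < B.natDegree) : 0 < (-1) ^ (i + 1) * (A + X * B).eval (β i) := by
  rw [eval_add, eval_mul, eval_X, (hB.isRoot i hi).eq_zero, mul_zero, add_zero]
  exact hA.neg_one_pow_mul_eval_pos hAlc (by omega) (fun _ => hβα i hi) (hαβ i)

theorem neg_one_pow_mul_eval_add_X_mul_left_pos (hA : HasSimpleNegRoots A α)
    (hB : HasSimpleNegRoots B β) (hBlc : 0 < B.leadingCoeff)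
    (hAB : A.natDegree ≤ B.natDegree + 1)
    (hβα : ∀ j < B.natDegree, β j < α j) (hαβ : ∀ j, j + 1 < A.natDegree → α (j + 1) < β j)
    {j : ℕ} (hj : j < A.natDegree) : 0 < (-1) ^ (j + 1) * (A + X * B).eval (α j) := by
  have hup : j ≠ 0 → α j < β (j - 1) := by
    rintro hj0
    obtain ⟨i, rfl⟩ := Nat.exists_eq_add_one_of_ne_zero hj0
    exact hαβ i hj
  have hBα := hB.neg_one_pow_mul_eval_pos hBlc (k := j) (by omega) hup (hβα j)
  rw [eval_add, eval_mul, eval_X, (hA.isRoot j hj).eq_zero, zero_add, pow_succ]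
  nlinarith [hA.neg j hj]

/-- The roots of `p` are found in the intervals `(α 0, 0), (α 1, β 0), (α 2, β 1), …`, the last
of them being `(-∞, β (deg B - 1))` when `deg A = deg B`. -/
theorem exists_of_eq_add_X_mul {p : ℝ[X]} (hA : HasSimpleNegRoots A α)
    (hB : HasSimpleNegRoots B β)
    (hAlc : 0 < A.leadingCoeff) (hBlc : 0 < B.leadingCoeff) (hplc : 0 < p.leadingCoeff)
    (hp : p = A + X * B) (hpB : p.natDegree = B.natDegree + 1)
    (hBA : B.natDegree ≤ A.natDegree) (hAB : A.natDegree ≤ B.natDegree + 1)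
    (hβα : ∀ j < B.natDegree, β j < α j) (hαβ : ∀ j, j + 1 < A.natDegree → α (j + 1) < β j) :
    ∃ γ, HasSimpleNegRoots p γ ∧ (∀ j < A.natDegree, α j < γ j) ∧
      ∀ j < B.natDegree, γ (j + 1) < β j := by
  set u : ℕ → ℝ := fun j => if j = 0 then 0 else β (j - 1)
  obtain ⟨L, hLu, hpL⟩ := exists_lt_neg_one_pow_mul_eval_pos (by omega) hplc (u B.natDegree)
  set ℓ : ℕ → ℝ := fun j => if j < A.natDegree then α j else L
  subst hp
  have hpu : ∀ j < (A + X * B).natDegree, 0 < (-1) ^ j * (A + X * B).eval (u j) := by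
    rintro (_ | i) hi
    · simpa [u] using hA.neg_one_pow_mul_eval_pos hAlc (Nat.zero_le _) (by simp) (hA.neg 0)
    · simpa [u] using hA.neg_one_pow_mul_eval_add_X_mul_right_pos hB hAlc hBA hβα hαβ
        (by omega : i < B.natDegree)
  have hpℓ : ∀ j < (A + X * B).natDegree, 0 < (-1) ^ (j + 1) * (A + X * B).eval (ℓ j) := by
    intro j hj
    by_cases hjA : j < A.natDegree
    · simpa [ℓ, hjA] using
        hA.neg_one_pow_mul_eval_add_X_mul_left_pos hB hBlc hAB hβα hαβ hjA
    · obtain rfl : j = B.natDegree := by omega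
      simpa only [ℓ, if_neg hjA, hpB] using hpL
  have hℓu : ∀ j < (A + X * B).natDegree, ℓ j < u j := by
    intro j hj
    by_cases hjA : j < A.natDegree
    · rcases j with _ | i
      · simpa [ℓ, u, hjA] using hA.neg 0 hjA
      · simpa [ℓ, u, hjA] using hαβ i hjA
    · obtain rfl : j = B.natDegree := by omega
      simpa only [ℓ, if_neg hjA] using hLu
  have huℓ : ∀ j, j + 1 < (A + X * B).natDegree → u (j + 1) ≤ ℓ j := fun j hj => by
    simpa [u, ℓ, show j < A.natDegree by omega] using (hβα j (by omega)).le
  have hu : ∀ j < (A + X * B).natDegree, u j ≤ 0 := by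
    rintro (_ | i) hi
    · simp [u]
    · simpa [u] using (hB.neg i (by omega)).le
  obtain ⟨γ, hγ, hmem⟩ := exists_hasSimpleNegRoots_of_sign_changes hℓu huℓ hu hpℓ hpu
  refine ⟨γ, hγ, fun j hj => ?_, fun j hj => ?_⟩
  · simpa [ℓ, hj] using (hmem j (by omega)).1
  · simpa [u] using (hmem (j + 1) (by omega)).2

end HasSimpleNegRoots

theorem Nat.choose_sub_mul_pred_ne_zero_iff (r n k : ℕ) :
    (n - r * (k - 1)).choose k ≠ 0 ↔ k ≤ (n + r) / (r + 1) := by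
  rw [Ne, Nat.choose_eq_zero_iff, not_lt, Nat.le_div_iff_mul_le (Nat.succ_pos r)]
  rcases k with _ | i
  · simp
  · have : (i + 1) * (r + 1) = r * i + i + r + 1 := by ring
    rw [Nat.add_sub_cancel, this]
    omega

theorem Nat.choose_succ_sub_mul (r n k : ℕ) :
    (n + 1 - r * k).choose (k + 1) =
      (n - r * k).choose (k + 1) + (n - r - r * (k - 1)).choose k := by
  rcases k with _ | i
  · simp
  · rw [Nat.add_sub_cancel, Nat.sub_sub, show r + r * i = r * (i + 1) by ring]
    by_cases h : r * (i + 1) ≤ n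
    · rw [show n + 1 - r * (i + 1) = n - r * (i + 1) + 1 by omega, Nat.choose_succ_succ', add_comm]
    · rw [show n + 1 - r * (i + 1) = 0 by omega, show n - r * (i + 1) = 0 by omega]
      simp

section Rydberg

variable (r : ℕ)

theorem coeff_Z (n k : ℕ) : (Z r n).coeff k = ((n - r * (k - 1)).choose k : ℝ) := by
  simp only [Z, finsetSum_coeff, coeff_C_mul_X_pow, sum_ite_eq, mem_range, Nat.lt_succ_iff]
  split_ifs with hk
  · rfl
  · rw [not_not.1 (mt (Nat.choose_sub_mul_pred_ne_zero_iff r n k).1 hk), Nat.cast_zero]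

theorem natDegree_Z (n : ℕ) : (Z r n).natDegree = (n + r) / (r + 1) := by
  refine natDegree_eq_of_le_of_coeff_ne_zero ?_ ?_
  · refine natDegree_le_iff_coeff_eq_zero.2 fun k hk => ?_
    rw [coeff_Z, Nat.cast_eq_zero]
    exact not_not.1 (mt (Nat.choose_sub_mul_pred_ne_zero_iff r n k).1 (not_le.2 hk))
  · rw [coeff_Z, Nat.cast_ne_zero]
    exact (Nat.choose_sub_mul_pred_ne_zero_iff r n _).2 le_rfl

theorem leadingCoeff_Z_pos (n : ℕ) : 0 < (Z r n).leadingCoeff := by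
  rw [leadingCoeff, coeff_Z, Nat.cast_pos, Nat.pos_iff_ne_zero,
    Nat.choose_sub_mul_pred_ne_zero_iff, natDegree_Z]

theorem Z_succ (n : ℕ) : Z r (n + 1) = Z r n + X * Z r (n - r) := by
  ext (_ | k)
  · simp [coeff_Z]
  · rw [coeff_add, coeff_X_mul, coeff_Z, coeff_Z, coeff_Z, Nat.add_sub_cancel,
      Nat.choose_succ_sub_mul, Nat.cast_add]

theorem natDegree_Z_zero : (Z r 0).natDegree = 0 := by
  rw [natDegree_Z, zero_add, Nat.div_eq_of_lt (Nat.lt_succ_self r)]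

theorem natDegree_Z_succ (n : ℕ) : (Z r (n + 1)).natDegree = (Z r (n - r)).natDegree + 1 := by
  rw [natDegree_Z, natDegree_Z, add_right_comm, add_assoc, Nat.add_div_right _ (Nat.succ_pos r)]
  rcases le_or_gt r n with h | h
  · rw [Nat.sub_add_cancel h]
  · rw [Nat.sub_eq_zero_of_le h.le, zero_add, Nat.div_eq_of_lt (Nat.lt_succ_self r),
      Nat.div_eq_of_lt (by omega)]

theorem natDegree_Z_mono {m n : ℕ} (h : m ≤ n) : (Z r m).natDegree ≤ (Z r n).natDegree := by
  rw [natDegree_Z, natDegree_Z]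
  exact Nat.div_le_div_right (by omega)

end Rydberg

/-- `x m` lists the roots of `Z r m` in decreasing order, for every `m ≤ n`. The last two fields
yield the interlacing of the roots of `Z r n` and `Z r (n - r)` that the next step needs. -/
structure RootHistory (r n : ℕ) (x : ℕ → ℕ → ℝ) : Prop where
  hasSimpleNegRoots : ∀ m ≤ n, HasSimpleNegRoots (Z r m) (x m)
  lt_of_lt : ∀ m' m, m' < m → m ≤ n → ∀ j < (Z r m').natDegree, x m' j < x m j
  succ_lt_sub : ∀ m < n, ∀ j, j + 1 < (Z r (m + 1)).natDegree → x (m + 1) (j + 1) < x (m - r) j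

namespace RootHistory

variable {r n : ℕ} {x : ℕ → ℕ → ℝ}

theorem zero (x : ℕ → ℕ → ℝ) : RootHistory r 0 x := by
  refine ⟨fun m hm => ?_, fun m' m hm' hm => by omega, fun m hm => by omega⟩
  obtain rfl : m = 0 := by omega
  exact ⟨fun j hj => by simp [natDegree_Z_zero] at hj, by simp [natDegree_Z_zero, StrictAntiOn],
    fun j hj => by simp [natDegree_Z_zero] at hj⟩

theorem update (h : RootHistory r n x) {γ : ℕ → ℝ} (hγ : HasSimpleNegRoots (Z r (n + 1)) γ)
    (hαγ : ∀ j < (Z r n).natDegree, x n j < γ j)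
    (hγβ : ∀ j < (Z r (n - r)).natDegree, γ (j + 1) < x (n - r) j) :
    RootHistory r (n + 1) (Function.update x (n + 1) γ) := by
  refine ⟨fun m hm => ?_, fun m' m hm' hm j hj => ?_, fun m hm j hj => ?_⟩
  · rcases hm.lt_or_eq with hm | rfl
    · rw [Function.update_of_ne (by omega)]
      exact h.hasSimpleNegRoots m (by omega)
    · rwa [Function.update_self]
  · rw [Function.update_of_ne (by omega : m' ≠ n + 1)]
    rcases hm.lt_or_eq with hm | rfl
    · rw [Function.update_of_ne (by omega)]
      exact h.lt_of_lt m' m hm' (by omega) j hj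
    · rw [Function.update_self]
      rcases (Nat.le_of_lt_succ hm').lt_or_eq with hm' | rfl
      · exact (h.lt_of_lt m' n hm' le_rfl j hj).trans
          (hαγ j (hj.trans_le (natDegree_Z_mono r hm'.le)))
      · exact hαγ j hj
  · rw [Function.update_of_ne (by omega : m - r ≠ n + 1)]
    rcases (Nat.le_of_lt_succ hm).lt_or_eq with hm | rfl
    · rw [Function.update_of_ne (by omega)]
      exact h.succ_lt_sub m hm j hj
    · rw [Function.update_self]
      exact hγβ j (by rw [natDegree_Z_succ] at hj; omega)

theorem succ (hr : 1 ≤ r) (h : RootHistory r n x) :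
    ∃ γ, RootHistory r (n + 1) (Function.update x (n + 1) γ) := by
  have hβα : ∀ j < (Z r (n - r)).natDegree, x (n - r) j < x n j := fun j hj => by
    have : n - r ≠ 0 := by rintro h0; simp [h0, natDegree_Z_zero] at hj
    exact h.lt_of_lt _ _ (by omega) le_rfl j hj
  have hαβ : ∀ j, j + 1 < (Z r n).natDegree → x n (j + 1) < x (n - r) j := by
    intro j hj
    obtain ⟨m, rfl⟩ : ∃ m, n = m + 1 := Nat.exists_eq_add_one.2 <| Nat.pos_of_ne_zero <| by
      rintro rfl; simp [natDegree_Z_zero] at hj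
    rw [natDegree_Z_succ] at hj
    have : m - r ≠ 0 := by rintro h0; simp [h0, natDegree_Z_zero] at hj
    exact (h.succ_lt_sub m (by omega) j (by rw [natDegree_Z_succ]; omega)).trans
      (h.lt_of_lt _ _ (by omega) (by omega) j (by omega))
  obtain ⟨γ, hγ, hαγ, hγβ⟩ := (h.hasSimpleNegRoots n le_rfl).exists_of_eq_add_X_mul
    (h.hasSimpleNegRoots (n - r) (by omega)) (leadingCoeff_Z_pos r n)
    (leadingCoeff_Z_pos r (n - r)) (leadingCoeff_Z_pos r (n + 1)) (Z_succ r n)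
    (natDegree_Z_succ r n) (natDegree_Z_mono r (by omega))
    ((natDegree_Z_mono r n.le_succ).trans (natDegree_Z_succ r n).le)
    hβα hαβ
  exact ⟨γ, h.update hγ hαγ hγβ⟩

end RootHistory

theorem exists_rootHistory {r : ℕ} (hr : 1 ≤ r) (n : ℕ) : ∃ x, RootHistory r n x := by
  induction n with
  | zero => exact ⟨fun _ _ => 0, RootHistory.zero _⟩
  | succ n ih =>
    obtain ⟨x, hx⟩ := ih
    obtain ⟨γ, hγ⟩ := hx.succ hr
    exact ⟨_, hγ⟩

theorem Z_zeros_real_neg_general (r : ℕ) (hr : 1 ≤ r) (n : ℕ) (z : ℂ)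
    (hz : ((Z r n).map (algebraMap ℝ ℂ)).IsRoot z) :
    ∃ x : ℝ, x < 0 ∧ (x : ℂ) = z := by
  obtain ⟨x, hx⟩ := exists_rootHistory hr n
  exact (hx.hasSimpleNegRoots n le_rfl).exists_neg_eq_of_isRoot_map
    (leadingCoeff_ne_zero.1 (leadingCoeff_Z_pos r n).ne') hz

/-- Theorem 1: For every integer `r ≥ 1` and every `n ≥ 1`, all complex zeros
of the polynomial `Z_n` are real and negative. -/
theorem Z_zeros_real_neg (r : ℕ) (hr : 1 ≤ r) (n : ℕ) (hn : 1 ≤ n) (z : ℂ)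
    (hz : ((Z r n).map (algebraMap ℝ ℂ)).IsRoot z) :
    ∃ x : ℝ, x < 0 ∧ (x : ℂ) = z :=
  Z_zeros_real_neg_general r hr n z hz
end

section
/- (Lemma 1, interlacing between groups) Fix an integer r ≥ 1 and an integer i ≥ 0. Let y_{1,n} > y_{2,n} > … > y_{i+1,n} denote the roots of Z_n arranged in decreasing order for n in the group (r+1)i+1 ≤ n ≤ (r+1)i+r+1. Then for every m with 1 ≤ m ≤ i, one has y_{m,(r+1)i+1} > y_{m+1,(r+1)i+r+1}; that is, the smallest member of the m-th family of roots within a group exceeds the largest member of the (m+1)-th family. -/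
open Polynomial

lemma choose_vanish (r n k : ℕ) (h : (n + r) / (r+1) + 1 ≤ k) : (n - r*(k-1)).choose k = 0 := by
  apply Nat.choose_eq_zero_of_lt
  have hk : 1 ≤ k := le_trans (Nat.le_add_left 1 _) h
  have h0 : (n+r)/(r+1) < k := lt_of_lt_of_le (Nat.lt_succ_self _) h
  have h1 : n + r < k * (r+1) := by
    have := (Nat.div_lt_iff_lt_mul (by omega : 0 < r+1)).mp h0
    omega
  have h2 : k * (r+1) = r*(k-1) + r + k := by
    cases k with
    | zero => omega
    | succ k' => simp [Nat.succ_sub_one]; ring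
  omega

lemma Z_coeff (r n k : ℕ) : (Z r n).coeff k = ((n - r*(k-1)).choose k : ℝ) := by
  unfold Z
  rw [Polynomial.finset_sum_coeff]
  by_cases hk : k < (n + r) / (r+1) + 1
  · rw [Finset.sum_eq_single k]
    · simp
    · intro b _ hbk
      simp [Polynomial.coeff_C_mul, Polynomial.coeff_X_pow, Ne.symm hbk]
    · intro h; exact absurd (Finset.mem_range.mpr hk) h
  · rw [choose_vanish r n k (by omega)]
    push_cast
    apply Finset.sum_eq_zero
    intro b hb
    have hbk : ¬ (k = b) := by simp at hb; omega
    simp [Polynomial.coeff_C_mul, Polynomial.coeff_X_pow, hbk]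


lemma choose_rec (m r k : ℕ) :
    ((m+1) - r*k).choose (k+1) = (m - r*k).choose (k+1) + ((m - r) - r*(k-1)).choose k := by
  have hs : (m - r) - r*(k-1) = m - (r + r*(k-1)) := by omega
  rw [hs]
  rcases Nat.eq_zero_or_pos k with hk | hk
  · subst hk; simp [Nat.choose_one_right]
  · have hrk : r + r*(k-1) = r*k := by
      cases k with
      | zero => omega
      | succ k' => simp [Nat.succ_sub_one]; ring
    rw [hrk]
    rcases le_or_gt (r*k) m with h | h
    · have h1 : (m+1) - r*k = (m - r*k) + 1 := by omega
      rw [h1, Nat.choose_succ_succ, Nat.add_comm]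
    · have h2 : m - r*k = 0 := by omega
      have h3 : (0:ℕ).choose (k+1) = 0 := Nat.choose_eq_zero_of_lt (by omega)
      have h4 : (0:ℕ).choose k = 0 := Nat.choose_eq_zero_of_lt hk
      rw [h2, h3, h4]
      rcases le_or_gt (r*k) (m+1) with h5 | h5
      · have h6 : (m+1) - r*k ≤ 1 := by omega
        interval_cases h7 : ((m+1) - r*k)
        · exact Nat.choose_eq_zero_of_lt (by omega)
        · exact Nat.choose_eq_zero_of_lt (by omega)
      · have h6 : (m+1) - r*k = 0 := by omega
        rw [h6]; exact Nat.choose_eq_zero_of_lt (by omega)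


lemma Z_rec (r m : ℕ) : Z r (m+1) = Z r m + X * Z r (m - r) := by
  ext k
  rw [Polynomial.coeff_add]
  cases k with
  | zero =>
    simp [Z_coeff]
  | succ j =>
    rw [Polynomial.coeff_X_mul, Z_coeff, Z_coeff, Z_coeff]
    have : (m+1) - r*((j+1)-1) = (m+1) - r*j := by simp
    rw [this]
    have : m - r*((j+1)-1) = m - r*j := by simp
    rw [this]
    exact_mod_cast congrArg (Nat.cast : ℕ → ℝ) (choose_rec m r j)


lemma Z_tel (r a b : ℕ) (hab : a ≤ b) :
    Z r b = Z r a + X * ∑ t ∈ Finset.Ico a b, Z r (t - r) := by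
  induction b, hab using Nat.le_induction with
  | base => simp
  | succ b hab ih =>
    rw [Z_rec, ih, Finset.sum_Ico_succ_top hab]
    ring


lemma key_identity (r a b : ℕ) (hab : a ≤ b) (hba : b ≤ a + r) :
    Z r a * derivative (Z r b) - derivative (Z r a) * Z r b
    = ∑ t ∈ Finset.Ico a b, ((Z r (t - r))^2 + X^2 * ∑ u ∈ Finset.Ico (t - r) a,
        (Z r (u - r) * derivative (Z r (t - r)) - derivative (Z r (u - r)) * Z r (t - r))) := by
  have point : ∀ t ∈ Finset.Ico a b,
      (Z r (t - r))^2 + X^2 * ∑ u ∈ Finset.Ico (t - r) a,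
        (Z r (u - r) * derivative (Z r (t - r)) - derivative (Z r (u - r)) * Z r (t - r))
      = Z r a * Z r (t-r) + X * (Z r a * derivative (Z r (t-r)) - derivative (Z r a) * Z r (t-r)) := by
    intro t ht
    have htr : t - r ≤ a := by
      simp only [Finset.mem_Ico] at ht; omega
    rw [Z_tel r (t-r) a htr]
    simp only [Finset.sum_sub_distrib, Finset.sum_mul, derivative_add, derivative_mul,
      derivative_X, derivative_sum, ← Finset.sum_mul, Finset.mul_sum]
    simp only [one_mul, Finset.sum_add_distrib, ← Finset.mul_sum]
    ring
  rw [Finset.sum_congr rfl point]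
  rw [Z_tel r a b hab]
  simp only [derivative_add, derivative_mul, derivative_X, derivative_sum,
    Finset.sum_add_distrib, Finset.sum_sub_distrib, ← Finset.mul_sum]
  ring


lemma Z_lin (r m : ℕ) (h : m ≤ r + 1) : Z r m = C (m:ℝ) * X + 1 := by
  unfold Z
  rcases Nat.eq_zero_or_pos m with hm | hm
  · subst hm
    have hd : (0 + r) / (r+1) = 0 := Nat.div_eq_of_lt (by omega)
    rw [hd]
    simp
  · have hd : (m + r) / (r+1) = 1 := by
      apply Nat.div_eq_of_lt_le <;> omega
    rw [hd]
    rw [Finset.sum_range_succ, Finset.sum_range_one]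
    simp [Nat.choose_one_right]
    ring

lemma Z_quad (r m : ℕ) (h1 : r + 2 ≤ m) (h2 : m ≤ 2*r + 1) :
    Z r m = C ((Nat.choose (m - r) 2 : ℝ)) * X^2 + C (m:ℝ) * X + 1 := by
  unfold Z
  have hd : (m + r) / (r+1) = 2 := by
    apply Nat.div_eq_of_lt_le <;> omega
  rw [hd]
  rw [Finset.sum_range_succ, Finset.sum_range_succ, Finset.sum_range_one]
  simp [Nat.choose_one_right]
  ring


lemma two_choose_two (p : ℕ) : 2 * Nat.choose p 2 = p * (p - 1) := by
  rw [Nat.choose_two_right]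
  rw [Nat.mul_div_cancel']
  rcases Nat.even_or_odd p with h | h
  · exact Dvd.dvd.mul_right h.two_dvd _
  · rcases Nat.eq_zero_or_pos p with h0 | h0
    · simp [h0]
    · exact Dvd.dvd.mul_left (Nat.Odd.sub_odd h odd_one).two_dvd _

lemma W_pos_base (r a b : ℕ) (ha : a ≤ r) (h1 : a < b) (h2 : b ≤ a + r) (x : ℝ) :
    0 < ((Z r a) * derivative (Z r b) - derivative (Z r a) * (Z r b)).eval x := by
  have hZa := Z_lin r a (by omega)
  rcases le_or_gt b (r+1) with hb | hb
  · have hZb := Z_lin r b (by omega)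
    rw [hZa, hZb]
    simp only [derivative_add, derivative_mul, derivative_C, derivative_X, derivative_one,
      eval_sub, eval_mul, eval_add, eval_one, eval_X, eval_C, zero_mul, mul_one, add_zero,
      zero_add, mul_zero]
    have : (↑a * x + 1) * ↑b - ↑a * (↑b * x + 1) = (b:ℝ) - a := by ring
    rw [this]
    have : (a:ℝ) < b := by exact_mod_cast h1
    linarith
  · have hZb := Z_quad r b (by omega) (by omega)
    set c := Nat.choose (b - r) 2 with hc
    have hc1 : 1 ≤ c := Nat.choose_pos (by omega)
    have ha2 : 2 ≤ a := by omega
    have hkey : c + a ≤ a * (b - a) := by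
      have e1 : (b-r) * ((b-r) - 1) ≤ (2*a) * ((b-a) - 1) :=
        Nat.mul_le_mul (by omega) (by omega)
      have e2 : 2*c = (b-r)*((b-r)-1) := two_choose_two (b-r)
      have e3 : (2*a) * ((b-a) - 1) + 2*a = 2 * (a * (b-a)) := by
        obtain ⟨q, hq⟩ : ∃ q, b - a = q + 1 := ⟨b - a - 1, by omega⟩
        rw [hq]
        simp [Nat.add_sub_cancel]
        ring
      omega
    rw [hZa, hZb]
    simp only [derivative_add, derivative_mul, derivative_C, derivative_X, derivative_one,
      derivative_X_pow, eval_sub, eval_mul, eval_add, eval_one, eval_X, eval_C, eval_pow,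
      zero_mul, mul_one, add_zero, zero_add, mul_zero]
    have hkeyR : (c:ℝ) + a ≤ a * ((b:ℝ) - a) := by
      have : ((b - a : ℕ):ℝ) = (b:ℝ) - a := by
        rw [Nat.cast_sub (le_of_lt h1)]
      calc (c:ℝ) + a = ((c + a : ℕ):ℝ) := by push_cast; ring
        _ ≤ ((a * (b-a) : ℕ):ℝ) := by exact_mod_cast hkey
        _ = a * ((b:ℝ) - a) := by push_cast [Nat.cast_sub (le_of_lt h1)]; ring
    have hcR : (1:ℝ) ≤ c := by exact_mod_cast hc1
    have haR : (2:ℝ) ≤ a := by exact_mod_cast ha2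
    have hac : (0:ℝ) < a*c := by nlinarith
    have hmul : (c:ℝ)*((c:ℝ)+a) ≤ c*(a*((b:ℝ)-a)) :=
      mul_le_mul_of_nonneg_left hkeyR (by linarith)
    norm_num
    nlinarith [sq_nonneg ((a:ℝ)*c*x + c), hac, hmul, sq_nonneg x]


lemma W_pos (r : ℕ) (x : ℝ) (hx : x ≠ 0) :
    ∀ b a, a < b → b ≤ a + r →
      0 < ((Z r a) * derivative (Z r b) - derivative (Z r a) * (Z r b)).eval x := by
  intro b
  induction b using Nat.strong_induction_on with
  | _ b ih =>
    intro a h1 h2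
    rcases le_or_gt a r with ha | ha
    · exact W_pos_base r a b ha h1 h2 x
    · rw [key_identity r a b (le_of_lt h1) h2, eval_finset_sum]
      apply Finset.sum_pos
      · intro t ht
        rw [Finset.mem_Ico] at ht
        simp only [eval_add, eval_pow, eval_mul, eval_finset_sum, eval_X]
        apply add_pos_of_nonneg_of_pos (sq_nonneg _)
        apply mul_pos (by positivity)
        apply Finset.sum_pos
        · intro u hu
          rw [Finset.mem_Ico] at hu
          exact ih (t - r) (by omega) (u - r) (by omega) (by omega)
        · exact Finset.nonempty_Ico.mpr (by omega)
      · exact Finset.nonempty_Ico.mpr h1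


lemma sign_prod {ι : Type*} [DecidableEq ι] (s : Finset ι) (f : ι → ℝ)
    (hne : ∀ a ∈ s, f a ≠ 0) :
    0 < (-1:ℝ)^((s.filter (fun a => f a < 0)).card) * ∏ a ∈ s, f a := by
  classical
  induction s using Finset.induction with
  | empty => simp
  | @insert a s' ha ih =>
    have hfa : f a ≠ 0 := hne a (Finset.mem_insert_self a s')
    have ih' := ih (fun b hb => hne b (Finset.mem_insert_of_mem hb))
    rw [Finset.filter_insert, Finset.prod_insert ha]
    rcases lt_or_gt_of_ne hfa with hlt | hgt
    · rw [if_pos hlt, Finset.card_insert_of_notMem (by simp [ha]), pow_succ]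
      have : (-1:ℝ) ^ (s'.filter (fun a => f a < 0)).card * -1 * (f a * ∏ b ∈ s', f b)
          = ((-1) * f a) * ((-1:ℝ) ^ (s'.filter (fun a => f a < 0)).card * ∏ b ∈ s', f b) := by ring
      rw [this]
      exact mul_pos (by linarith) ih'
    · rw [if_neg (by linarith)]
      have : (-1:ℝ) ^ (s'.filter (fun a => f a < 0)).card * (f a * ∏ b ∈ s', f b)
          = f a * ((-1:ℝ) ^ (s'.filter (fun a => f a < 0)).card * ∏ b ∈ s', f b) := by ring
      rw [this]
      exact mul_pos hgt ih'

lemma card_filter_lt_fin {d : ℕ} (k : Fin d) :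
    (Finset.univ.filter (fun l : Fin d => l < k)).card = (k : ℕ) := by
  have : Finset.univ.filter (fun l : Fin d => l < k) = Finset.Iio k := by
    ext l; simp
  rw [this, Fin.card_Iio]

lemma card_filter_lt_fin_erase {d : ℕ} (k : Fin d) :
    ((Finset.univ.erase k).filter (fun l : Fin d => l < k)).card = (k : ℕ) := by
  have : (Finset.univ.erase k).filter (fun l : Fin d => l < k)
      = Finset.univ.filter (fun l : Fin d => l < k) := by
    ext l
    simp only [Finset.mem_filter, Finset.mem_erase, Finset.mem_univ, true_and, and_true]
    constructor
    · tauto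
    · intro h; exact ⟨ne_of_lt h, h⟩
  rw [this, card_filter_lt_fin]


lemma factor_eq {d : ℕ} (p : Polynomial ℝ) (y : Fin d → ℝ) (hinj : Function.Injective y)
    (hroot : ∀ k, p.IsRoot (y k)) (hdeg : p.natDegree = d) (c : ℝ) (hc : p.coeff d = c)
    (hc0 : c ≠ 0) :
    p = C c * ∏ k : Fin d, (X - C (y k)) := by
  classical
  set G : Polynomial ℝ := ∏ k : Fin d, (X - C (y k)) with hG
  have hGmonic : G.Monic := monic_prod_of_monic _ _ (fun _ _ => monic_X_sub_C _)
  have hGdeg : G.natDegree = d := by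
    rw [hG, natDegree_prod_of_monic _ _ (fun _ _ => monic_X_sub_C _)]
    simp [natDegree_X_sub_C]
  have hdvd : G ∣ p := by
    apply Finset.prod_dvd_of_coprime
    · exact (pairwise_coprime_X_sub_C hinj).set_pairwise _
    · exact fun k _ => dvd_iff_isRoot.mpr (hroot k)
  obtain ⟨v, hv⟩ := hdvd
  have hp0 : p ≠ 0 := by
    intro h
    rw [h] at hc
    simp at hc
    exact hc0 hc.symm
  have hv0 : v ≠ 0 := by
    rintro rfl
    rw [mul_zero] at hv
    exact hp0 hv
  have hvdeg : v.natDegree = 0 := by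
    have := hdeg
    rw [hv, natDegree_mul hGmonic.ne_zero hv0, hGdeg] at this
    omega
  have hvC : v = C (v.coeff 0) := eq_C_of_natDegree_eq_zero hvdeg
  have hcoeff : p.coeff d = v.coeff 0 := by
    rw [hv, hvC, mul_comm, coeff_C_mul]
    have : G.coeff d = 1 := by
      have := hGmonic
      rw [Monic, leadingCoeff, hGdeg] at this
      rw [this]
    rw [this]
    simp
  rw [hv, hvC, ← hcoeff, hc, mul_comm]


section
variable (r i : ℕ) (hr : 1 ≤ r)

lemma P_div : (((r+1)*i+1) + r) / (r+1) = i+1 := by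
  have h : ((r+1)*i+1) + r = (i+1)*(r+1) := by ring
  rw [h, Nat.mul_div_cancel _ (by omega)]

lemma Q_div : (((r+1)*i+r+1) + r) / (r+1) = i+1 := by
  apply Nat.div_eq_of_lt_le
  · calc (i+1)*(r+1) = (r+1)*i + r + 1 := by ring
      _ ≤ ((r+1)*i+r+1) + r := by omega
  · calc ((r+1)*i+r+1) + r < (r+1)*i + 2*(r+1) := by omega
      _ = (i+1+1)*(r+1) := by ring

lemma P_top : (Z r ((r+1)*i+1)).coeff (i+1) = 1 := by
  rw [Z_coeff]
  have h1 : (r+1)*i+1 - r*((i+1)-1) = i+1 := by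
    simp only [Nat.add_sub_cancel]
    have : (r+1)*i+1 = r*i + (i+1) := by ring
    omega
  rw [h1, Nat.choose_self, Nat.cast_one]

lemma Q_top : (Z r ((r+1)*i+r+1)).coeff (i+1) = ((i+r+1).choose (i+1) : ℝ) := by
  rw [Z_coeff]
  have h1 : (r+1)*i+r+1 - r*((i+1)-1) = i+r+1 := by
    simp only [Nat.add_sub_cancel]
    have : (r+1)*i+r+1 = r*i + (i+r+1) := by ring
    omega
  rw [h1]

lemma P_deg : (Z r ((r+1)*i+1)).natDegree = i+1 := by
  apply le_antisymm
  · rw [natDegree_le_iff_coeff_eq_zero]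
    intro N hN
    rw [Z_coeff, choose_vanish r _ N (by rw [P_div]; omega), Nat.cast_zero]
  · apply le_natDegree_of_ne_zero
    rw [P_top]; norm_num

lemma Q_deg : (Z r ((r+1)*i+r+1)).natDegree = i+1 := by
  apply le_antisymm
  · rw [natDegree_le_iff_coeff_eq_zero]
    intro N hN
    rw [Z_coeff, choose_vanish r _ N (by rw [Q_div]; omega), Nat.cast_zero]
  · apply le_natDegree_of_ne_zero
    rw [Q_top]
    have : 0 < (i+r+1).choose (i+1) := Nat.choose_pos (by omega)
    positivity

end


/-- Lemma 1, interlacing between groups: Fix `r ≥ 1` and `i ≥ 0`. If `y`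
(resp. `y'`) lists the `i+1` distinct negative real roots of `Z_{(r+1)i+1}` (resp.
`Z_{(r+1)i+r+1}`) in decreasing order, then for every `m` with `1 ≤ m ≤ i` one has
`y_{m,(r+1)i+1} > y_{m+1,(r+1)i+r+1}`. -/
theorem Z_roots_interlace_between_groups (r i : ℕ) (hr : 1 ≤ r)
    (y y' : Fin (i + 1) → ℝ)
    (hy_anti : StrictAnti y) (hy'_anti : StrictAnti y')
    (hy_neg : ∀ k, y k < 0) (hy'_neg : ∀ k, y' k < 0)
    (hy_root : ∀ k, (Z r ((r + 1) * i + 1)).IsRoot (y k))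
    (hy'_root : ∀ k, (Z r ((r + 1) * i + r + 1)).IsRoot (y' k))
    (hy_all : ∀ x : ℝ, (Z r ((r + 1) * i + 1)).IsRoot x → ∃ k, x = y k)
    (hy'_all : ∀ x : ℝ, (Z r ((r + 1) * i + r + 1)).IsRoot x → ∃ k, x = y' k) :
    ∀ (m : ℕ) (h : m + 1 < i + 1), y' ⟨m + 1, h⟩ < y ⟨m, by omega⟩ := by
  classical
  set P := Z r ((r + 1) * i + 1) with hPdef
  set Q := Z r ((r + 1) * i + r + 1) with hQdef
  set κ : ℝ := ((i+r+1).choose (i+1) : ℝ) with hκdef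
  have hκpos : 0 < κ := by
    have h0 : 0 < (i+r+1).choose (i+1) := Nat.choose_pos (by omega)
    rw [hκdef]
    exact_mod_cast h0
  have hP : P = ∏ k : Fin (i+1), (X - C (y k)) := by
    have := factor_eq P y hy_anti.injective hy_root (P_deg r i) 1 (P_top r i) one_ne_zero
    simpa using this
  have hQ : Q = C κ * ∏ k : Fin (i+1), (X - C (y' k)) :=
    factor_eq Q y' hy'_anti.injective hy'_root (Q_deg r i) κ (Q_top r i) (ne_of_gt hκpos)
  -- parity claim
  have parity : ∀ k : Fin (i+1),
      Even ((Finset.univ.filter (fun j => y' k < y j)).card + (k : ℕ)) := by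
    intro k
    set x := y' k with hxdef
    have hx0 : x ≠ 0 := ne_of_lt (hy'_neg k)
    have hW := W_pos r x hx0 ((r+1)*i+r+1) ((r+1)*i+1) (by omega) (by omega)
    rw [← hPdef, ← hQdef] at hW
    have hQx : Q.eval x = 0 := hy'_root k
    rw [eval_sub, eval_mul, eval_mul, hQx, mul_zero, sub_zero] at hW
    -- evaluate P
    have evalP : P.eval x = ∏ j, (x - y j) := by
      rw [hP, eval_prod]
      simp
    -- evaluate derivative Q
    set R : Polynomial ℝ := ∏ l ∈ Finset.univ.erase k, (X - C (y' l)) with hRdef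
    have hsplit : (∏ l : Fin (i+1), (X - C (y' l))) = (X - C (y' k)) * R :=
      (Finset.mul_prod_erase _ _ (Finset.mem_univ k)).symm
    have evalDQ : (derivative Q).eval x = κ * R.eval x := by
      rw [hQ, hsplit]
      rw [derivative_mul, derivative_C, zero_mul, derivative_mul, derivative_sub,
        derivative_X, derivative_C, sub_zero, one_mul]
      simp only [zero_add, eval_mul, eval_add, eval_sub, eval_X, eval_C, ← hxdef, sub_self,
        zero_mul, add_zero, mul_zero]
    have evalR : R.eval x = ∏ l ∈ Finset.univ.erase k, (x - y' l) := by
      rw [hRdef, eval_prod]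
      simp
    rw [evalP, evalDQ, evalR] at hW
    have hAB : 0 < (∏ j, (x - y j)) * (∏ l ∈ Finset.univ.erase k, (x - y' l)) := by
      have h1 : (∏ j, (x - y j)) * (κ * (∏ l ∈ Finset.univ.erase k, (x - y' l)))
          = κ * ((∏ j, (x - y j)) * (∏ l ∈ Finset.univ.erase k, (x - y' l))) := by ring
      rw [h1] at hW
      exact (mul_pos_iff_of_pos_left hκpos).mp hW
    have hAne : ∀ j ∈ Finset.univ, x - y j ≠ 0 := by
      intro j _ h0
      have hA0 : (∏ j : Fin (i+1), (x - y j)) = 0 := Finset.prod_eq_zero (Finset.mem_univ j) h0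
      rw [hA0, zero_mul] at hAB
      exact lt_irrefl _ hAB
    have hBne : ∀ l ∈ Finset.univ.erase k, x - y' l ≠ 0 := by
      intro l hl h0
      have hB0 : (∏ l ∈ Finset.univ.erase k, (x - y' l)) = 0 := Finset.prod_eq_zero hl h0
      rw [hB0, mul_zero] at hAB
      exact lt_irrefl _ hAB
    have hsA := sign_prod Finset.univ (fun j => x - y j) hAne
    have hsB := sign_prod (Finset.univ.erase k) (fun l => x - y' l) hBne
    have hcardA : (Finset.univ.filter (fun j => x - y j < 0)).card
        = (Finset.univ.filter (fun j => y' k < y j)).card := by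
      congr 1
      apply Finset.filter_congr
      intro j _
      simp [hxdef, sub_neg]
    have hcardB : ((Finset.univ.erase k).filter (fun l => x - y' l < 0)).card = (k : ℕ) := by
      rw [← card_filter_lt_fin_erase k]
      congr 1
      apply Finset.filter_congr
      intro l hl
      rw [Finset.mem_erase] at hl
      simp only [hxdef, sub_neg, eq_iff_iff]
      constructor
      · intro h
        rcases lt_trichotomy l k with h1 | h1 | h1
        · exact h1
        · exact absurd h1 hl.1
        · exact absurd (hy'_anti h1) (not_lt.mpr (le_of_lt h))
      · intro h
        exact hy'_anti h
    rw [hcardA] at hsA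
    rw [hcardB] at hsB
    by_contra hodd
    rw [Nat.not_even_iff_odd] at hodd
    have hprod := mul_pos hsA hsB
    have heq : ((-1:ℝ)^(Finset.univ.filter (fun j => y' k < y j)).card * ∏ j, (x - y j))
        * ((-1:ℝ)^(k:ℕ) * ∏ l ∈ Finset.univ.erase k, (x - y' l))
        = (-1:ℝ)^((Finset.univ.filter (fun j => y' k < y j)).card + (k:ℕ))
          * ((∏ j, (x - y j)) * (∏ l ∈ Finset.univ.erase k, (x - y' l))) := by
      rw [pow_add]; ring
    rw [heq, hodd.neg_one_pow] at hprod
    nlinarith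
  -- growth claim
  have growth : ∀ (m : ℕ) (h : m < i + 1),
      m ≤ (Finset.univ.filter (fun j => y' ⟨m, h⟩ < y j)).card := by
    intro m
    induction m with
    | zero => omega
    | succ m ih =>
      intro h
      have hm : m < i + 1 := by omega
      have hmono : (Finset.univ.filter (fun j => y' ⟨m, hm⟩ < y j)).card
          ≤ (Finset.univ.filter (fun j => y' ⟨m+1, h⟩ < y j)).card := by
        apply Finset.card_le_card
        intro j hj
        rw [Finset.mem_filter] at hj ⊢
        have hlt : y' ⟨m+1, h⟩ < y' ⟨m, hm⟩ := hy'_anti (by simp [Fin.lt_def])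
        exact ⟨hj.1, lt_trans hlt hj.2⟩
      have hp1 := parity ⟨m, hm⟩
      have hp2 := parity ⟨m+1, h⟩
      simp only at hp1 hp2
      obtain ⟨c1, hc1⟩ := hp1
      obtain ⟨c2, hc2⟩ := hp2
      have := ih hm
      omega
  -- conclusion
  intro m h
  by_contra hcon
  push_neg at hcon
  have hgrow := growth (m+1) h
  have hsub : (Finset.univ.filter (fun j => y' ⟨m+1, h⟩ < y j))
      ⊆ (Finset.univ.filter (fun j => j < (⟨m, by omega⟩ : Fin (i+1)))) := by
    intro j hj
    rw [Finset.mem_filter] at hj ⊢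
    refine ⟨hj.1, ?_⟩
    by_contra hjm
    push_neg at hjm
    have : y j ≤ y ⟨m, by omega⟩ := hy_anti.antitone hjm
    have := hj.2
    linarith
  have hcard := Finset.card_le_card hsub
  rw [card_filter_lt_fin] at hcard
  simp only at hcard hgrow
  omega
end

section
/- (Theorem 2) For every integer r ≥ 1 and every n ≥ 1, every real zero y of the polynomial Z_n satisfies y < y_0, where y_0 = -r^r/(r+1)^{r+1}. -/
open Polynomial Finset

def cc (r n m : ℕ) : ℕ := Nat.choose (n - r * (m - 1)) m

noncomputable def F (r : ℕ) (y : ℝ) (n : ℕ) : ℝ :=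
  ∑ m ∈ Finset.range (n + 1), (cc r n m : ℝ) * y ^ m

lemma cc_zero_of_lt {r n m : ℕ} (h : n < m) : cc r n m = 0 := by
  apply Nat.choose_eq_zero_of_lt
  have := Nat.sub_le n (r * (m - 1))
  omega

lemma cc_zero_of_div {r n m : ℕ} (h : n + r < m * (r + 1)) : cc r n m = 0 := by
  apply Nat.choose_eq_zero_of_lt
  rcases m with _ | k
  · omega
  · have e1 : (k+1) * (r+1) = k*r + k + r + 1 := by ring
    have e2 : r * k = k * r := Nat.mul_comm r k
    simp only [Nat.add_sub_cancel]
    omega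

lemma cc_pascal (r n k : ℕ) : cc r (n + r + 1) (k + 1) = cc r (n + r) (k + 1) + cc r n k := by
  unfold cc
  simp only [Nat.add_sub_cancel]
  by_cases h : r * k ≤ n + r
  · have hb : n + r + 1 - r * k = (n + r - r * k) + 1 := by omega
    rw [hb, Nat.choose_succ_succ]
    rcases k with _ | j
    · simp [Nat.add_comm]
    · have e : n - r * (j + 1 - 1) = n + r - r * (j+1) := by
        have : r * (j+1) = r*j + r := by ring
        simp only [Nat.add_sub_cancel]
        omega
      rw [e, Nat.add_comm]
  · rcases k with _ | j
    · omega
    · have e : r * (j + 1) = r * j + r := by ring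
      have h1 : n + r + 1 - r * (j+1) = 0 := by omega
      have h2 : n + r - r * (j+1) = 0 := by omega
      have h3 : n - r * (j+1-1) = 0 := by simp only [Nat.add_sub_cancel]; omega
      rw [h1, h2, h3]
      simp [Nat.choose_eq_zero_of_lt]

lemma Z_eval (r n : ℕ) (hn : 1 ≤ n) (y : ℝ) :
    (Z r n).eval y = F r y n := by
  rw [Z, F]
  rw [eval_finset_sum]
  simp only [eval_mul, eval_C, eval_pow, eval_X, cc]
  apply Finset.sum_subset
  · apply Finset.range_subset_range.2
    have e : (n+1)*(r+1) = n*r + n + r + 1 := by ring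
    have h1 : (n + r) / (r + 1) < n + 1 := (Nat.div_lt_iff_lt_mul (by omega)).2 (by omega)
    omega
  · intro m hm hm2
    have h1 : (n + r) / (r + 1) < m := by
      simp only [Finset.mem_range] at hm hm2
      omega
    have h2 : n + r < m * (r+1) := (Nat.div_lt_iff_lt_mul (by omega)).1 h1
    have := cc_zero_of_div (r := r) h2
    unfold cc at this
    rw [this]
    simp

lemma F_rec (r : ℕ) (y : ℝ) (n : ℕ) :
    F r y (n + r + 1) = F r y (n + r) + y * F r y n := by
  have h1 : F r y (n + r) = ∑ m ∈ Finset.range (n + r + 2), (cc r (n+r) m : ℝ) * y ^ m := by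
    rw [F]
    apply Finset.sum_subset (Finset.range_subset_range.2 (by omega))
    intro m hm hm2
    simp only [Finset.mem_range] at hm hm2
    rw [cc_zero_of_lt (by omega)]
    simp
  have h2 : y * F r y n = ∑ m ∈ Finset.range (n + r + 1), (cc r n m : ℝ) * y ^ (m+1) := by
    rw [F, Finset.mul_sum]
    rw [← Finset.sum_subset (Finset.range_subset_range.2 (by omega : n + 1 ≤ n + r + 1))]
    · apply Finset.sum_congr rfl
      intro m _
      ring
    · intro m hm hm2
      simp only [Finset.mem_range] at hm hm2
      rw [cc_zero_of_lt (by omega)]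
      simp
  rw [h1, h2, F]
  rw [Finset.sum_range_succ' (fun m => (cc r (n+r+1) m : ℝ) * y ^ m) (n+r+1)]
  rw [Finset.sum_range_succ' (fun m => (cc r (n+r) m : ℝ) * y ^ m) (n+r+1)]
  rw [add_right_comm _ ((cc r (n+r) 0 : ℝ) * y ^ 0) _, ← Finset.sum_add_distrib]
  congr 1
  · apply Finset.sum_congr rfl
    intro k _
    have := cc_pascal r n k
    push_cast [this]
    ring
  · simp [cc]

lemma F_base (r : ℕ) (hr : 1 ≤ r) (y : ℝ) {n : ℕ} (hn : n ≤ r + 1) :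
    F r y n = 1 + n * y := by
  rcases Nat.eq_zero_or_pos n with h | h
  · subst h; simp [F, cc]
  · rw [F, ← Finset.sum_subset (Finset.range_subset_range.2 (by omega : 2 ≤ n + 1))]
    · rw [Finset.sum_range_succ, Finset.sum_range_one]
      simp [cc]
    · intro m hm hm2
      simp only [Finset.mem_range] at hm hm2
      have h2 : cc r n m = 0 := by
        apply Nat.choose_eq_zero_of_lt
        have : r * 1 ≤ r * (m-1) := Nat.mul_le_mul_left r (by omega)
        omega
      rw [h2]; simp

lemma key_ineq (r : ℕ) (hr : 1 ≤ r) : (2*(r:ℝ)+1) * (r:ℝ)^r ≤ ((r:ℝ)+1)^(r+1) := by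
  have hrR : (1:ℝ) ≤ r := by exact_mod_cast hr
  have hrpos : (0:ℝ) < r := by linarith
  have h2 : (2:ℝ) * (r:ℝ)^r ≤ ((r:ℝ)+1)^r := by
    have hge : (-2:ℝ) ≤ 1/(r:ℝ) := by
      have : (0:ℝ) ≤ 1/(r:ℝ) := by positivity
      linarith
    have h := one_add_mul_le_pow hge r
    have h2' : (2:ℝ) ≤ (1 + 1/(r:ℝ))^r := by
      have e1 : (1:ℝ) + (r:ℝ) * (1/(r:ℝ)) = 2 := by field_simp; norm_num
      linarith [h]
    have e : ((r:ℝ)+1) = r * (1 + 1/r) := by field_simp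
    rw [e, mul_pow]
    have hp : (0:ℝ) ≤ (r:ℝ)^r := by positivity
    nlinarith [pow_nonneg (le_of_lt hrpos) r]
  have hp : (0:ℝ) ≤ (r:ℝ)^r := by positivity
  calc (2*(r:ℝ)+1) * (r:ℝ)^r ≤ ((r:ℝ)+1) * (2 * (r:ℝ)^r) := by nlinarith
    _ ≤ ((r:ℝ)+1) * ((r:ℝ)+1)^r := by nlinarith
    _ = ((r:ℝ)+1)^(r+1) := by rw [pow_succ]; ring

lemma F_pos_neg (r : ℕ) (hr : 1 ≤ r) (y : ℝ)
    (h0 : -((r:ℝ)^r / ((r:ℝ)+1)^(r+1)) ≤ y) (h1 : y < 0) :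
    ∀ n, 0 < F r y n ∧ (r:ℝ)/((r:ℝ)+1) * F r y n ≤ F r y (n+1) := by
  set c := (r:ℝ)/((r:ℝ)+1) with hc
  have hrR : (1:ℝ) ≤ r := by exact_mod_cast hr
  have hr1 : (0:ℝ) < (r:ℝ)+1 := by linarith
  have hc0 : 0 < c := by rw [hc]; positivity
  have hc1 : c < 1 := by rw [hc, div_lt_one hr1]; linarith
  have hy2 : -1 ≤ (2*(r:ℝ)+1) * y := by
    have hK := key_ineq r hr
    have hp : (0:ℝ) < ((r:ℝ)+1)^(r+1) := by positivity
    have hq : (0:ℝ) ≤ (r:ℝ)^r := by positivity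
    have hb : (2*(r:ℝ)+1) * ((r:ℝ)^r / ((r:ℝ)+1)^(r+1)) ≤ 1 := by
      rw [mul_div_assoc'] at *
      rw [div_le_one hp]
      linarith
    nlinarith [mul_le_mul_of_nonneg_left h0 (by linarith : (0:ℝ) ≤ 2*(r:ℝ)+1)]
  have hcpow : (1 - c) * c^r = (r:ℝ)^r / ((r:ℝ)+1)^(r+1) := by
    rw [hc, div_pow, pow_succ]
    field_simp
    ring
  intro n
  induction n using Nat.strong_induction_on with
  | _ n IH =>
    by_cases hn : n ≤ r
    · have e0 : F r y n = 1 + n * y := F_base r hr y (by omega)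
      have e1 : F r y (n+1) = 1 + (n+1 : ℕ) * y := F_base r hr y (by omega)
      push_cast at e1
      have hnR : (n:ℝ) ≤ r := by exact_mod_cast hn
      constructor
      · rw [e0]
        nlinarith [mul_le_mul_of_nonneg_right (by linarith : (n:ℝ) ≤ 2*(r:ℝ)+1) (by linarith : (0:ℝ) ≤ -y)]
      · rw [e0, e1, hc, div_mul_eq_mul_div, div_le_iff₀ hr1]
        push_cast
        nlinarith [mul_le_mul_of_nonneg_right (by linarith : (n:ℝ) + (r:ℝ) + 1 ≤ 2*(r:ℝ)+1) (by linarith : (0:ℝ) ≤ -y)]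
    · push_neg at hn
      obtain ⟨m, rfl⟩ : ∃ m, n = m + r + 1 := ⟨n - r - 1, by omega⟩
      have step : ∀ p, (∀ k, k < p + r → (0 < F r y k ∧ c * F r y k ≤ F r y (k+1))) →
          0 < F r y (p + r) ∧ c * F r y (p + r) ≤ F r y (p + r + 1) := by
        intro p hP
        have chain : ∀ j, j ≤ r → c ^ j * F r y p ≤ F r y (p + j) := by
          intro j hj
          induction j with
          | zero => simp
          | succ i ihi =>
            have ha := (hP (p+i) (by omega)).2
            have hb := ihi (by omega)
            calc c^(i+1) * F r y p = c * (c^i * F r y p) := by ring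
              _ ≤ c * F r y (p+i) := by nlinarith [hb, hc0]
              _ ≤ F r y (p+i+1) := ha
        have hFp : 0 < F r y p := (hP p (by omega)).1
        have hch := chain r le_rfl
        have hFpr : 0 < F r y (p + r) := lt_of_lt_of_le (by positivity) hch
        refine ⟨hFpr, ?_⟩
        rw [F_rec r y p]
        have hy' : -((1-c) * c^r) ≤ y := by rw [hcpow]; exact h0
        have t1 : (1-c) * (c^r * F r y p) ≤ (1-c) * F r y (p+r) :=
          mul_le_mul_of_nonneg_left hch (by linarith)
        have t2 : (-((1-c) * c^r)) * F r y p ≤ y * F r y p :=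
          mul_le_mul_of_nonneg_right hy' hFp.le
        nlinarith [t1, t2]
      have IH' : ∀ k, k < m + r → (0 < F r y k ∧ c * F r y k ≤ F r y (k+1)) :=
        fun k hk => IH k (by omega)
      have IH'' : ∀ k, k < m + 1 + r → (0 < F r y k ∧ c * F r y k ≤ F r y (k+1)) :=
        fun k hk => IH k (by omega)
      obtain ⟨hA, hB⟩ := step m IH'
      obtain ⟨hA2, hB2⟩ := step (m+1) IH''
      have e : m + 1 + r = m + r + 1 := by omega
      rw [e] at hA2 hB2
      exact ⟨lt_of_lt_of_le (by positivity) hB, hB2⟩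

lemma F_pos_nonneg (r n : ℕ) (y : ℝ) (hy : 0 ≤ y) : 0 < F r y n := by
  have h0 : (0:ℝ) < (cc r n 0 : ℝ) * y^0 := by simp [cc]
  apply lt_of_lt_of_le h0
  apply Finset.single_le_sum (f := fun m => (cc r n m : ℝ) * y ^ m)
  · intro i _
    positivity
  · simp



/-- Theorem 2: For every integer `r ≥ 1` and every `n ≥ 1`, every real zero
`y` of the polynomial `Z_n` satisfies `y < y₀`, where `y₀ = -r^r/(r+1)^{r+1}`. -/
theorem Z_zeros_lt_y0 (r n : ℕ) (hr : 1 ≤ r) (hn : 1 ≤ n) (y : ℝ)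
    (hy : (Z r n).IsRoot y) :
    y < -(r : ℝ) ^ r / ((r : ℝ) + 1) ^ (r + 1) := by
  by_contra h
  push_neg at h
  rw [neg_div] at h
  have hZ : 0 < F r y n := by
    rcases lt_or_ge y 0 with hy' | hy'
    · exact (F_pos_neg r hr y h hy' n).1
    · exact F_pos_nonneg r n y hy'
  have := hy
  rw [IsRoot.def, Z_eval r n hn y] at this
  exact absurd this (ne_of_gt hZ)
end

section
/- For blockade radius r = 1 and every n ≥ 1, the zeros of the polynomial Z_n are exactly the ⌊(n+1)/2⌋ pairwise distinct real numbers y_m = -1/(4 cos²(π m/(n+2))) for m = 1, 2, …, ⌊(n+1)/2⌋; in particular each y_m satisfies Z_n(y_m) = 0 and every zero of Z_n equals some y_m. -/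
open Polynomial

/-!
The Pascal rule gives `Z_{n+2} = Z_{n+1} + X Z_n`, which is the recurrence of the Chebyshev
polynomials `S_n` after the substitution `y = -1/x²`: precisely `x^(n+1) Z_n(-1/x²) = S_{n+1}(x)`.
Since `S_{n+1}(2 cos θ) sin θ = sin((n+2)θ)`, each `θ_m = πm/(n+2)` with `1 ≤ m ≤ ⌊(n+1)/2⌋`
gives a root `-1/(4 cos² θ_m)`; these roots are distinct because `cos` is injective and
positive on `[0, π/2)`, and there are `⌊(n+1)/2⌋ ≥ deg Z_n` of them, so there are no others.
-/

open Real

theorem Polynomial.mem_of_isRoot_of_natDegree_le_card {R : Type*} [CommRing R] [IsDomain R]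
    {p : R[X]} (hp : p ≠ 0) {s : Finset R} (hs : ∀ x ∈ s, p.IsRoot x)
    (hdeg : p.natDegree ≤ s.card) {y : R} (hy : p.IsRoot y) : y ∈ s := by
  have hle : s.val ≤ p.roots :=
    (Multiset.le_iff_subset s.nodup).mpr fun x hx => (mem_roots hp).mpr (hs x hx)
  have heq : s.val = p.roots :=
    Multiset.eq_of_le_of_card_le hle ((card_roots' p).trans hdeg)
  rw [← Finset.mem_val, heq, mem_roots hp]
  exact hy

theorem coeff_Z_one (n m : ℕ) : (Z 1 n).coeff m = ((n - (m - 1)).choose m : ℝ) := by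
  simp only [Z, finsetSum_coeff, coeff_C_mul, coeff_X_pow, mul_ite, mul_one, mul_zero, one_mul,
    Finset.sum_ite_eq, Finset.mem_range]
  split_ifs with hm
  · rfl
  · rw [Nat.choose_eq_zero_of_lt (by omega), Nat.cast_zero]

theorem Z_one_zero : Z 1 0 = 1 := by
  simp [Z]

theorem Z_one_one : Z 1 1 = 1 + X := by
  simp [Z, Finset.sum_range_succ]

theorem Z_one_add_two (n : ℕ) : Z 1 (n + 2) = Z 1 (n + 1) + X * Z 1 n := by
  ext (_ | m)
  · simp [coeff_Z_one]
  · rw [coeff_add, coeff_X_mul, coeff_Z_one, coeff_Z_one, coeff_Z_one, ← Nat.cast_add]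
    congr 1
    rcases le_or_gt m n with hmn | hnm
    · obtain ⟨k, rfl⟩ := Nat.exists_eq_add_of_le hmn
      rw [show m + k + 2 - (m + 1 - 1) = k + 1 + 1 by omega,
        show m + k + 1 - (m + 1 - 1) = k + 1 by omega, Nat.choose_succ_succ', add_comm]
      rcases m with _ | m
      · simp
      · rw [show m + 1 + k - (m + 1 - 1) = k + 1 by omega]
    · rw [Nat.choose_eq_zero_of_lt (by omega), Nat.choose_eq_zero_of_lt (by omega),
        Nat.choose_eq_zero_of_lt (by omega)]

theorem Z_one_ne_zero (n : ℕ) : Z 1 n ≠ 0 := fun h => by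
  simpa [h] using coeff_Z_one n 0

theorem natDegree_Z_one_le (n : ℕ) : (Z 1 n).natDegree ≤ (n + 1) / 2 := by
  refine natDegree_le_iff_coeff_eq_zero.mpr fun m hm => ?_
  rw [coeff_Z_one, Nat.choose_eq_zero_of_lt (by omega), Nat.cast_zero]

theorem pow_succ_mul_eval_Z_one {x : ℝ} (hx : x ≠ 0) (n : ℕ) :
    x ^ (n + 1) * (Z 1 n).eval (-(1 / x ^ 2)) = (Chebyshev.S ℝ (n + 1)).eval x := by
  induction n using Nat.twoStepInduction with
  | zero => simp [Z_one_zero]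
  | one =>
    simp only [Z_one_one, eval_add, eval_one, eval_X, Nat.cast_one, one_add_one_eq_two,
      Chebyshev.S_two, eval_sub, eval_pow]
    field_simp
    ring
  | more k hk hk1 =>
    rw [Z_one_add_two, eval_add, eval_mul, eval_X,
      show ((k + 2 : ℕ) : ℤ) + 1 = (k + 1 : ℤ) + 2 by push_cast; ring, Chebyshev.S_add_two,
      eval_sub, eval_mul, eval_X, ← hk]
    push_cast at hk1
    rw [← hk1]
    field_simp
    ring

theorem isRoot_Z_one_of_sin_mul_eq_zero {θ : ℝ} (hcos : cos θ ≠ 0) (hsin : sin θ ≠ 0) {n : ℕ}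
    (h : sin ((n + 2) * θ) = 0) : (Z 1 n).IsRoot (-(1 / (4 * cos θ ^ 2))) := by
  have hx : 2 * cos θ ≠ 0 := mul_ne_zero two_ne_zero hcos
  have hZ := pow_succ_mul_eval_Z_one hx n
  have hS := Chebyshev.S_two_mul_real_cos θ (n + 1)
  rw [← hZ, show ((n + 1 : ℤ) : ℝ) + 1 = n + 2 by push_cast; ring, h] at hS
  have hy : -(1 / (2 * cos θ) ^ 2) = -(1 / (4 * cos θ ^ 2)) := by ring
  rw [hy] at hS
  exact (mul_eq_zero.mp ((mul_eq_zero.mp hS).resolve_right hsin)).resolve_left (pow_ne_zero _ hx)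

theorem injOn_neg_one_div_four_mul_cos_sq :
    Set.InjOn (fun θ => -(1 / (4 * cos θ ^ 2))) (Set.Ico 0 (π / 2)) := by
  intro θ hθ θ' hθ' h
  have hcos : 0 < cos θ := cos_pos_of_mem_Ioo ⟨by linarith [hθ.1, pi_pos], hθ.2⟩
  have hcos' : 0 < cos θ' := cos_pos_of_mem_Ioo ⟨by linarith [hθ'.1, pi_pos], hθ'.2⟩
  have hsq : 4 * cos θ ^ 2 = 4 * cos θ' ^ 2 := by simpa only [neg_inj, one_div, inv_inj] using h
  refine injOn_cos ⟨hθ.1, by linarith [hθ.2, pi_pos]⟩ ⟨hθ'.1, by linarith [hθ'.2, pi_pos]⟩ ?_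
  exact (pow_left_inj₀ hcos.le hcos'.le two_ne_zero).mp (by linarith)

theorem pi_mul_div_add_two_mem_Ioo {n m : ℕ} (hm : 1 ≤ m) (hmn : m ≤ (n + 1) / 2) :
    π * m / (n + 2) ∈ Set.Ioo 0 (π / 2) := by
  have h2m : (2 * m : ℝ) < n + 2 := by exact_mod_cast (by omega : 2 * m < n + 2)
  constructor
  · have : (0 : ℝ) < m := by exact_mod_cast hm
    positivity
  · rw [div_lt_iff₀ (by positivity)]
    nlinarith [pi_pos]

theorem isRoot_Z_one_neg_one_div_four_mul_cos_sq {n m : ℕ} (hm : 1 ≤ m) (hmn : m ≤ (n + 1) / 2) :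
    (Z 1 n).IsRoot (-(1 / (4 * cos (π * m / (n + 2)) ^ 2))) := by
  obtain ⟨hpos, hlt⟩ := pi_mul_div_add_two_mem_Ioo hm hmn
  refine isRoot_Z_one_of_sin_mul_eq_zero (cos_pos_of_mem_Ioo ⟨by linarith, hlt⟩).ne'
    (sin_pos_of_pos_of_lt_pi hpos (by linarith)).ne' ?_
  rw [mul_div_cancel₀ _ (by positivity), mul_comm]
  exact sin_nat_mul_pi m

theorem injOn_neg_one_div_four_mul_cos_sq_pi_mul_div (n : ℕ) :
    Set.InjOn (fun m : ℕ => -(1 / (4 * cos (π * m / (n + 2)) ^ 2))) (Set.Icc 1 ((n + 1) / 2)) := by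
  intro m hm m' hm' h
  have hθ := injOn_neg_one_div_four_mul_cos_sq
    (Set.Ioo_subset_Ico_self (pi_mul_div_add_two_mem_Ioo hm.1 hm.2))
    (Set.Ioo_subset_Ico_self (pi_mul_div_add_two_mem_Ioo hm'.1 hm'.2)) h
  rw [div_left_inj' (by positivity), mul_right_inj' pi_ne_zero] at hθ
  exact_mod_cast hθ

theorem Z_zeros_r1_general (n : ℕ) :
    (∀ m : ℕ, 1 ≤ m → m ≤ (n + 1) / 2 →
        (Z 1 n).IsRoot (-(1 / (4 * Real.cos (Real.pi * m / (n + 2)) ^ 2)))) ∧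
    (∀ y : ℝ, (Z 1 n).IsRoot y → ∃ m : ℕ, 1 ≤ m ∧ m ≤ (n + 1) / 2 ∧
        y = -(1 / (4 * Real.cos (Real.pi * m / (n + 2)) ^ 2))) ∧
    (∀ m m' : ℕ, 1 ≤ m → m ≤ (n + 1) / 2 → 1 ≤ m' → m' ≤ (n + 1) / 2 →
        (-(1 / (4 * Real.cos (Real.pi * m / (n + 2)) ^ 2)) : ℝ) =
          -(1 / (4 * Real.cos (Real.pi * m' / (n + 2)) ^ 2)) → m = m') := by
  have hinj := injOn_neg_one_div_four_mul_cos_sq_pi_mul_div n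
  refine ⟨fun m => isRoot_Z_one_neg_one_div_four_mul_cos_sq, fun y hy => ?_,
    fun m m' hm hmn hm' hmn' h => hinj ⟨hm, hmn⟩ ⟨hm', hmn'⟩ h⟩
  set roots := (Finset.Icc 1 ((n + 1) / 2)).image
    fun m : ℕ => -(1 / (4 * cos (π * m / (n + 2)) ^ 2))
  have hcard : roots.card = (n + 1) / 2 := by
    rw [Finset.card_image_of_injOn (by simpa using hinj), Nat.card_Icc, Nat.add_sub_cancel]
  have hroots : ∀ x ∈ roots, (Z 1 n).IsRoot x := by
    simp only [roots, Finset.mem_image, Finset.mem_Icc]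
    rintro _ ⟨m, ⟨hm, hmn⟩, rfl⟩
    exact isRoot_Z_one_neg_one_div_four_mul_cos_sq hm hmn
  have hy := mem_of_isRoot_of_natDegree_le_card (Z_one_ne_zero n) hroots
    (hcard ▸ natDegree_Z_one_le n) hy
  simp only [roots, Finset.mem_image, Finset.mem_Icc] at hy
  obtain ⟨m, ⟨hm, hmn⟩, rfl⟩ := hy
  exact ⟨m, hm, hmn, rfl⟩

/-- For blockade radius `r = 1` and every `n ≥ 1`, the zeros of `Z_n` are
exactly the `⌊(n+1)/2⌋` pairwise distinct real numbers
`y_m = -1/(4 cos²(π m/(n+2)))` for `m = 1,…,⌊(n+1)/2⌋`. -/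
theorem Z_zeros_r1 (n : ℕ) (hn : 1 ≤ n) :
    (∀ m : ℕ, 1 ≤ m → m ≤ (n + 1) / 2 →
        (Z 1 n).IsRoot (-(1 / (4 * Real.cos (Real.pi * m / (n + 2)) ^ 2)))) ∧
    (∀ y : ℝ, (Z 1 n).IsRoot y → ∃ m : ℕ, 1 ≤ m ∧ m ≤ (n + 1) / 2 ∧
        y = -(1 / (4 * Real.cos (Real.pi * m / (n + 2)) ^ 2))) ∧
    (∀ m m' : ℕ, 1 ≤ m → m ≤ (n + 1) / 2 → 1 ≤ m' → m' ≤ (n + 1) / 2 →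
        (-(1 / (4 * Real.cos (Real.pi * m / (n + 2)) ^ 2)) : ℝ) =
          -(1 / (4 * Real.cos (Real.pi * m' / (n + 2)) ^ 2)) → m = m') :=
  Z_zeros_r1_general n
end
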